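/- Let 0 < m ≤ M₂, M₃ > 0, and let U : ℝ^d → ℝ be three times continuously differentiable with m‖v‖² ≤ ⟨∇²U(y)v, v⟩ ≤ M₂‖v‖² and ‖∇³U(y)‖ ≤ M₃ (operator norm of the third derivative as a trilinear form) for all y, v ∈ ℝ^d. Let δ ≥ 0 and let x, x′ : [0,∞) → ℝ^d be continuous curves with ‖x′(t) − x(t)‖ ≤ √2 · e^{−mt/(2M₂)} · δ for all t ≥ 0. Let (Q, P) and (Q′, P′) be differentiable matrix-valued solutions of Q̇ = P, Ṗ = −(1/M₂)∇²U(x(t))Q − 2P and Q̇′ = P′, Ṗ′ = −(1/M₂)∇²U(x′(t))Q′ − 2P′, with the same initial condition (I_d, 0) or (0, I_d). Then for all t ≥ 0, writing ΔQ = Q′(t) − Q(t) and ΔP = P′(t) − P(t): 2ΔQᵀΔQ + ΔQᵀΔP + ΔPᵀΔQ + ΔPᵀΔP ≼ (32M₃²/m²) · e^{−mt/(4M₂)} · δ² · I_d. -/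

import Mathlib

open Matrix

/-- The Hessian matrix of `U` at `y`, with entries `∂²U/∂yᵢ∂yⱼ` given by the second
iterated Fréchet derivative evaluated at pairs of coordinate basis vectors. -/
noncomputable def hessMat {d : ℕ} (U : EuclideanSpace ℝ (Fin d) → ℝ)
    (y : EuclideanSpace ℝ (Fin d)) : Matrix (Fin d) (Fin d) ℝ :=
  Matrix.of fun i j =>
    iteratedFDeriv ℝ 2 U y ![EuclideanSpace.single i 1, EuclideanSpace.single j 1]

namespace Stmt3Aux

noncomputable def n2 {d : ℕ} (v : Fin d → ℝ) : ℝ := ∑ i, v i ^ 2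
noncomputable def Bf {d : ℕ} (H : Matrix (Fin d) (Fin d) ℝ) (a b : Fin d → ℝ) : ℝ :=
  ∑ i, ∑ j, a i * b j * H i j
noncomputable def ι {d : ℕ} (v : Fin d → ℝ) : EuclideanSpace ℝ (Fin d) :=
  (WithLp.equiv 2 _).symm v

variable {d : ℕ}

lemma n2_nonneg (v : Fin d → ℝ) : 0 ≤ n2 v := Finset.sum_nonneg fun _ _ => sq_nonneg _

lemma euclid_sum_apply (f : Fin d → EuclideanSpace ℝ (Fin d)) (j : Fin d) :
    (∑ i, f i) j = ∑ i, f i j := by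
  induction (Finset.univ : Finset (Fin d)) using Finset.induction with
  | empty => rfl
  | insert _ _ h ih => rw [Finset.sum_insert h, Finset.sum_insert h, ← ih]; rfl

lemma euclid_decomp (a : EuclideanSpace ℝ (Fin d)) :
    a = ∑ i, a i • EuclideanSpace.single i (1:ℝ) := by
  ext j
  rw [euclid_sum_apply]
  simp [EuclideanSpace.single_apply]

lemma pair_eq (U : EuclideanSpace ℝ (Fin d) → ℝ) (y a b : EuclideanSpace ℝ (Fin d)) :
    iteratedFDeriv ℝ 2 U y ![a, b] = ∑ i, ∑ j, a i * b j * hessMat U y i j := by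
  have h2 : ∀ v w : EuclideanSpace ℝ (Fin d),
      iteratedFDeriv ℝ 2 U y ![v, w] = fderiv ℝ (fderiv ℝ U) y v w := by
    intro v w
    rw [iteratedFDeriv_two_apply]
    simp
  rw [h2]
  conv_lhs => rw [euclid_decomp a, euclid_decomp b]
  simp only [map_sum, _root_.map_smul, ContinuousLinearMap.sum_apply,
    ContinuousLinearMap.smul_apply, smul_eq_mul]
  have hH : ∀ i j, hessMat U y i j =
      fderiv ℝ (fderiv ℝ U) y (EuclideanSpace.single i 1) (EuclideanSpace.single j 1) := by
    intro i j
    rw [show hessMat U y i j = iteratedFDeriv ℝ 2 U y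
      ![EuclideanSpace.single i 1, EuclideanSpace.single j 1] from rfl, h2]
  simp only [hH, Finset.mul_sum]
  rw [Finset.sum_comm]
  exact Finset.sum_congr rfl fun i _ => Finset.sum_congr rfl fun j _ => by ring

lemma norm_ι_sq (v : Fin d → ℝ) : ‖ι v‖ ^ 2 = ∑ i, v i ^ 2 := by
  rw [EuclideanSpace.norm_eq, Real.sq_sqrt (by positivity)]
  simp [ι, sq_abs]

lemma norm_ι_eq (v : Fin d → ℝ) : ‖ι v‖ = Real.sqrt (∑ i, v i ^ 2) := by
  rw [EuclideanSpace.norm_eq]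
  congr 1
  simp [ι, sq_abs]

lemma hess_symm (U : EuclideanSpace ℝ (Fin d) → ℝ) (hU : ContDiff ℝ 3 U)
    (y : EuclideanSpace ℝ (Fin d)) (i j : Fin d) : hessMat U y i j = hessMat U y j i := by
  have hs : IsSymmSndFDerivAt ℝ U y := hU.contDiffAt.isSymmSndFDerivAt (by norm_num)
  have h2 : ∀ v w : EuclideanSpace ℝ (Fin d),
      iteratedFDeriv ℝ 2 U y ![v, w] = fderiv ℝ (fderiv ℝ U) y v w := by
    intro v w; rw [iteratedFDeriv_two_apply]; simp
  show iteratedFDeriv ℝ 2 U y ![_, _] = iteratedFDeriv ℝ 2 U y ![_, _]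
  rw [h2, h2, hs]

lemma hess_lip (U : EuclideanSpace ℝ (Fin d) → ℝ) (hU : ContDiff ℝ 3 U) (M₃ : ℝ)
    (hThird : ∀ y : EuclideanSpace ℝ (Fin d), ‖iteratedFDeriv ℝ 3 U y‖ ≤ M₃)
    (y z : EuclideanSpace ℝ (Fin d)) :
    ‖iteratedFDeriv ℝ 2 U z - iteratedFDeriv ℝ 2 U y‖ ≤ M₃ * ‖z - y‖ := by
  exact Convex.norm_image_sub_le_of_norm_fderiv_le
    (f := iteratedFDeriv ℝ 2 U) (C := M₃) (s := Set.univ)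
    (fun x _ => (hU.differentiable_iteratedFDeriv (by norm_num) x))
    (fun x _ => by rw [norm_fderiv_iteratedFDeriv]; exact hThird x)
    convex_univ (Set.mem_univ y) (Set.mem_univ z)

lemma pair_lip (U : EuclideanSpace ℝ (Fin d) → ℝ) (hU : ContDiff ℝ 3 U) (M₃ : ℝ)
    (hThird : ∀ y : EuclideanSpace ℝ (Fin d), ‖iteratedFDeriv ℝ 3 U y‖ ≤ M₃)
    (y z : EuclideanSpace ℝ (Fin d)) (a b : Fin d → ℝ) :
    |(∑ i, ∑ j, a i * b j * hessMat U z i j) - ∑ i, ∑ j, a i * b j * hessMat U y i j|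
      ≤ M₃ * ‖z - y‖ * Real.sqrt (∑ i, a i ^ 2) * Real.sqrt (∑ i, b i ^ 2) := by
  have e1 : iteratedFDeriv ℝ 2 U z ![ι a, ι b] = ∑ i, ∑ j, a i * b j * hessMat U z i j :=
    pair_eq U z (ι a) (ι b)
  have e2 : iteratedFDeriv ℝ 2 U y ![ι a, ι b] = ∑ i, ∑ j, a i * b j * hessMat U y i j :=
    pair_eq U y (ι a) (ι b)
  rw [← e1, ← e2]
  have h1 : (iteratedFDeriv ℝ 2 U z) ![ι a, ι b] - (iteratedFDeriv ℝ 2 U y) ![ι a, ι b]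
      = (iteratedFDeriv ℝ 2 U z - iteratedFDeriv ℝ 2 U y) ![ι a, ι b] := by
    simp [ContinuousMultilinearMap.sub_apply]
  rw [h1]
  calc |(iteratedFDeriv ℝ 2 U z - iteratedFDeriv ℝ 2 U y) ![ι a, ι b]|
      ≤ ‖iteratedFDeriv ℝ 2 U z - iteratedFDeriv ℝ 2 U y‖ * (‖ι a‖ * ‖ι b‖) := by
        have := (iteratedFDeriv ℝ 2 U z - iteratedFDeriv ℝ 2 U y).le_opNorm ![ι a, ι b]
        simpa [Fin.prod_univ_two, Real.norm_eq_abs, mul_assoc] using this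
    _ ≤ M₃ * ‖z - y‖ * Real.sqrt (∑ i, a i ^ 2) * Real.sqrt (∑ i, b i ^ 2) := by
        rw [norm_ι_eq, norm_ι_eq]
        have h2 := hess_lip U hU M₃ hThird y z
        have ha : (0:ℝ) ≤ Real.sqrt (∑ i, a i ^ 2) := Real.sqrt_nonneg _
        have hb : (0:ℝ) ≤ Real.sqrt (∑ i, b i ^ 2) := Real.sqrt_nonneg _
        nlinarith [mul_le_mul_of_nonneg_right h2 (mul_nonneg ha hb)]

lemma ip_mulVec (H : Matrix (Fin d) (Fin d) ℝ) (a b : Fin d → ℝ) :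
    ∑ i, a i * (H *ᵥ b) i = Bf H a b := by
  unfold Bf
  refine Finset.sum_congr rfl fun i _ => ?_
  simp [Matrix.mulVec, dotProduct, Finset.mul_sum]
  exact Finset.sum_congr rfl fun j _ => by ring

lemma Bf_symm {H : Matrix (Fin d) (Fin d) ℝ} (hsym : ∀ i j, H i j = H j i)
    (a b : Fin d → ℝ) : Bf H a b = Bf H b a := by
  unfold Bf
  rw [Finset.sum_comm]
  exact Finset.sum_congr rfl fun i _ => Finset.sum_congr rfl fun j _ => by rw [hsym]; ring

lemma Bf_expand {H : Matrix (Fin d) (Fin d) ℝ} (hsym : ∀ i j, H i j = H j i)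
    (a b : Fin d → ℝ) : Bf H (a - b) (a - b) = Bf H a a - 2 * Bf H a b + Bf H b b := by
  have h1 : Bf H (a-b) (a-b) = Bf H a a - Bf H a b - Bf H b a + Bf H b b := by
    unfold Bf
    simp only [← Finset.sum_add_distrib, ← Finset.sum_sub_distrib]
    refine Finset.sum_congr rfl fun i _ => Finset.sum_congr rfl fun j _ => ?_
    simp only [Pi.sub_apply]
    ring
  rw [h1, Bf_symm hsym b a]; ring

lemma n2_sub (a b : Fin d → ℝ) :
    n2 (a - b) = n2 a - 2 * (∑ i, a i * b i) + n2 b := by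
  unfold n2
  simp only [← Finset.sum_add_distrib, ← Finset.sum_sub_distrib, Finset.mul_sum]
  exact Finset.sum_congr rfl fun i _ => by simp [Pi.sub_apply]; ring

lemma lyap_core (m M₂ : ℝ) (hm : 0 < m) (hmM : m ≤ M₂)
    (H : Matrix (Fin d) (Fin d) ℝ) (hsym : ∀ i j, H i j = H j i)
    (hlow : ∀ v : Fin d → ℝ, m * n2 v ≤ Bf H v v)
    (hhigh : ∀ v : Fin d → ℝ, Bf H v v ≤ M₂ * n2 v)
    (q p e : Fin d → ℝ) :
    (∑ i, 2 * q i * p i) +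
      (∑ i, 2 * (q i + p i) * (p i + (-(1/M₂) * ((H *ᵥ q) i + e i) - 2 * p i)))
    ≤ -(m/(2*M₂)) * (n2 q + n2 (q + p)) + (2/(m*M₂)) * n2 e := by
  have hM₂ : 0 < M₂ := lt_of_lt_of_le hm hmM
  set u : Fin d → ℝ := q + p with hu
  have hup : ∀ i, u i = q i + p i := fun i => rfl
  have hLHS : (∑ i, 2 * q i * p i) +
      (∑ i, 2 * (q i + p i) * (p i + (-(1/M₂) * ((H *ᵥ q) i + e i) - 2 * p i)))
      = -2 * n2 q - 2 * n2 u + 4 * (∑ i, u i * q i)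
        - (2/M₂) * Bf H u q - (2/M₂) * (∑ i, u i * e i) := by
    rw [← ip_mulVec H u q]
    unfold n2
    simp only [← Finset.sum_add_distrib, ← Finset.sum_sub_distrib, Finset.mul_sum]
    refine Finset.sum_congr rfl fun i _ => ?_
    rw [hup]
    field_simp
    ring
  rw [hLHS]
  have h1 := hlow u
  have h2 := hlow q
  have h3 := hhigh (u - q)
  have h4 := Bf_expand hsym u q
  have h5 := n2_sub u q
  have hE : -2 * (∑ i, u i * e i) ≤ (m/2) * n2 u + (2/m) * n2 e := by
    unfold n2
    rw [Finset.mul_sum, Finset.mul_sum, Finset.mul_sum, ← Finset.sum_add_distrib]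
    apply Finset.sum_le_sum
    intro i _
    rw [show m/2 * u i ^ 2 + 2/m * e i ^ 2 = (m^2 * u i ^2 + 4 * e i ^2)/(2*m) by
      field_simp; ring, le_div_iff₀ (by positivity)]
    nlinarith [sq_nonneg (m * u i + 2 * e i)]
  have key : M₂ * (-2 * n2 q - 2 * n2 u + 4 * (∑ i, u i * q i)
        - (2/M₂) * Bf H u q - (2/M₂) * (∑ i, u i * e i))
      ≤ M₂ * (-(m/(2*M₂)) * (n2 q + n2 u) + (2/(m*M₂)) * n2 e) := by
    have e1 : M₂ * (-2 * n2 q - 2 * n2 u + 4 * (∑ i, u i * q i)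
        - (2/M₂) * Bf H u q - (2/M₂) * (∑ i, u i * e i))
        = -2*M₂*n2 q - 2*M₂*n2 u + 4*M₂*(∑ i, u i * q i)
          - 2 * Bf H u q - 2 * (∑ i, u i * e i) := by field_simp
    have e2 : M₂ * (-(m/(2*M₂)) * (n2 q + n2 u) + (2/(m*M₂)) * n2 e)
        = -(m/2) * (n2 q + n2 u) + (2/m) * n2 e := by field_simp
    rw [e1, e2]
    have h3' : Bf H u u - 2 * Bf H u q + Bf H q q
        ≤ M₂ * n2 u - 2 * (M₂ * (∑ i, u i * q i)) + M₂ * n2 q := by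
      calc Bf H u u - 2 * Bf H u q + Bf H q q = Bf H (u-q) (u-q) := h4.symm
        _ ≤ M₂ * n2 (u - q) := h3
        _ = M₂ * n2 u - 2 * (M₂ * (∑ i, u i * q i)) + M₂ * n2 q := by rw [h5]; ring
    have hA : (0:ℝ) ≤ M₂ * n2 u - 2 * (M₂ * (∑ i, u i * q i)) + M₂ * n2 q := by
      have := mul_nonneg hM₂.le (n2_nonneg (u - q))
      calc (0:ℝ) ≤ M₂ * n2 (u - q) := this
        _ = M₂ * n2 u - 2 * (M₂ * (∑ i, u i * q i)) + M₂ * n2 q := by rw [h5]; ring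
    have hq0 : 0 ≤ m * n2 q := mul_nonneg hm.le (n2_nonneg q)
    nlinarith [h3', hA, h1, h2, hE, hq0]
  have hfin := le_of_mul_le_mul_left key hM₂
  linarith [hfin]

lemma hess_form_bounds (m M₂ : ℝ) (U : EuclideanSpace ℝ (Fin d) → ℝ)
    (hHess : ∀ y v : EuclideanSpace ℝ (Fin d),
      m * ‖v‖ ^ 2 ≤ iteratedFDeriv ℝ 2 U y ![v, v] ∧
        iteratedFDeriv ℝ 2 U y ![v, v] ≤ M₂ * ‖v‖ ^ 2)
    (y : EuclideanSpace ℝ (Fin d)) (v : Fin d → ℝ) :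
    m * n2 v ≤ Bf (hessMat U y) v v ∧ Bf (hessMat U y) v v ≤ M₂ * n2 v := by
  have hpe : iteratedFDeriv ℝ 2 U y ![ι v, ι v] = Bf (hessMat U y) v v :=
    pair_eq U y (ι v) (ι v)
  have hn : ‖ι v‖ ^ 2 = n2 v := norm_ι_sq v
  obtain ⟨h1, h2⟩ := hHess y (ι v)
  rw [hpe, hn] at h1 h2
  exact ⟨h1, h2⟩

lemma mulVec_sq_bound (U : EuclideanSpace ℝ (Fin d) → ℝ) (hU : ContDiff ℝ 3 U) (M₃ : ℝ)
    (hM₃ : 0 ≤ M₃)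
    (hThird : ∀ y : EuclideanSpace ℝ (Fin d), ‖iteratedFDeriv ℝ 3 U y‖ ≤ M₃)
    (y z : EuclideanSpace ℝ (Fin d)) (b : Fin d → ℝ) :
    n2 ((hessMat U z - hessMat U y) *ᵥ b) ≤ (M₃ * ‖z - y‖)^2 * n2 b := by
  set a : Fin d → ℝ := (hessMat U z - hessMat U y) *ᵥ b with ha
  have key : n2 a ≤ M₃ * ‖z - y‖ * Real.sqrt (n2 a) * Real.sqrt (n2 b) := by
    have h1 : n2 a = Bf (hessMat U z) a b - Bf (hessMat U y) a b := by
      rw [← ip_mulVec (hessMat U z) a b, ← ip_mulVec (hessMat U y) a b]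
      unfold n2
      rw [← Finset.sum_sub_distrib]
      refine Finset.sum_congr rfl fun i _ => ?_
      rw [ha]
      simp only [Matrix.sub_mulVec, Pi.sub_apply]
      ring
    have h2 : |Bf (hessMat U z) a b - Bf (hessMat U y) a b|
        ≤ M₃ * ‖z - y‖ * Real.sqrt (n2 a) * Real.sqrt (n2 b) :=
      pair_lip U hU M₃ hThird y z a b
    calc n2 a = Bf (hessMat U z) a b - Bf (hessMat U y) a b := h1
      _ ≤ |Bf (hessMat U z) a b - Bf (hessMat U y) a b| := le_abs_self _
      _ ≤ M₃ * ‖z - y‖ * Real.sqrt (n2 a) * Real.sqrt (n2 b) := h2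
  have hs : Real.sqrt (n2 a) ^ 2 = n2 a := Real.sq_sqrt (n2_nonneg a)
  have hsb : Real.sqrt (n2 b) ^ 2 = n2 b := Real.sq_sqrt (n2_nonneg b)
  have hsa0 : 0 ≤ Real.sqrt (n2 a) := Real.sqrt_nonneg _
  have hsb0 : 0 ≤ Real.sqrt (n2 b) := Real.sqrt_nonneg _
  have hc0 : 0 ≤ M₃ * ‖z - y‖ := mul_nonneg hM₃ (norm_nonneg _)
  have hss : Real.sqrt (n2 a) ≤ M₃ * ‖z - y‖ * Real.sqrt (n2 b) := by
    rcases eq_or_lt_of_le hsa0 with h0 | h0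
    · rw [← h0]; positivity
    · have := key
      rw [← hs] at this
      nlinarith
  calc n2 a = Real.sqrt (n2 a) ^ 2 := hs.symm
    _ ≤ (M₃ * ‖z - y‖ * Real.sqrt (n2 b)) ^ 2 := by
        apply pow_le_pow_left₀ hsa0 hss
    _ = (M₃ * ‖z - y‖)^2 * n2 b := by rw [mul_pow, hsb]

lemma le_of_deriv_nonneg {f : ℝ → ℝ} {g : ℝ → ℝ}
    (hf : ∀ s ∈ Set.Ici (0:ℝ), HasDerivAt f (g s) s)
    (hg : ∀ s ∈ Set.Ici (0:ℝ), 0 ≤ g s) {t : ℝ} (ht : 0 ≤ t) : f 0 ≤ f t := by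
  have h1 : MonotoneOn f (Set.Ici 0) := by
    apply monotoneOn_of_deriv_nonneg (convex_Ici 0)
    · exact fun s hs => (hf s hs).continuousAt.continuousWithinAt
    · intro s hs
      rw [interior_Ici] at hs
      exact (hf s (Set.mem_Ici.mpr (le_of_lt (Set.mem_Ioi.mp hs)))).differentiableAt.differentiableWithinAt
    · intro s hs
      rw [interior_Ici] at hs
      rw [(hf s (Set.mem_Ici.mpr (le_of_lt (Set.mem_Ioi.mp hs)))).deriv]
      exact hg s (Set.mem_Ici.mpr (le_of_lt (Set.mem_Ioi.mp hs)))
  exact h1 Set.self_mem_Ici ht ht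

lemma hasDerivAt_mulVec (A : ℝ → Matrix (Fin d) (Fin d) ℝ)
    (B : Matrix (Fin d) (Fin d) ℝ) (w : Fin d → ℝ) (s : ℝ) (i : Fin d)
    (h : ∀ j, HasDerivAt (fun r => A r i j) (B i j) s) :
    HasDerivAt (fun r => (A r *ᵥ w) i) ((B *ᵥ w) i) s := by
  simp only [Matrix.mulVec, dotProduct]
  exact HasDerivAt.fun_sum fun j _ => (h j).mul_const (w j)

end Stmt3Aux
set_option maxHeartbeats 2000000 in
open Stmt3Aux in
theorem stmt_3 (d : ℕ) (m M₂ M₃ : ℝ) (hm : 0 < m) (hmM : m ≤ M₂) (hM₃ : 0 < M₃)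
    (U : EuclideanSpace ℝ (Fin d) → ℝ) (hU : ContDiff ℝ 3 U)
    (hHess : ∀ y v : EuclideanSpace ℝ (Fin d),
      m * ‖v‖ ^ 2 ≤ iteratedFDeriv ℝ 2 U y ![v, v] ∧
        iteratedFDeriv ℝ 2 U y ![v, v] ≤ M₂ * ‖v‖ ^ 2)
    (hThird : ∀ y : EuclideanSpace ℝ (Fin d), ‖iteratedFDeriv ℝ 3 U y‖ ≤ M₃)
    (δ : ℝ) (hδ : 0 ≤ δ)
    (x x' : ℝ → EuclideanSpace ℝ (Fin d))
    (hxc : ContinuousOn x (Set.Ici 0)) (hx'c : ContinuousOn x' (Set.Ici 0))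
    (hclose : ∀ t, 0 ≤ t →
      ‖x' t - x t‖ ≤ Real.sqrt 2 * Real.exp (-(m * t) / (2 * M₂)) * δ)
    (Q P Q' P' : ℝ → Matrix (Fin d) (Fin d) ℝ)
    (hQ : ∀ t, 0 ≤ t → ∀ i j, HasDerivAt (fun s => Q s i j) (P t i j) t)
    (hP : ∀ t, 0 ≤ t → ∀ i j, HasDerivAt (fun s => P s i j)
      (((-(1 / M₂)) • (hessMat U (x t) * Q t) - (2 : ℝ) • P t) i j) t)
    (hQ' : ∀ t, 0 ≤ t → ∀ i j, HasDerivAt (fun s => Q' s i j) (P' t i j) t)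
    (hP' : ∀ t, 0 ≤ t → ∀ i j, HasDerivAt (fun s => P' s i j)
      (((-(1 / M₂)) • (hessMat U (x' t) * Q' t) - (2 : ℝ) • P' t) i j) t)
    (hinit : (Q 0 = 1 ∧ P 0 = 0 ∧ Q' 0 = 1 ∧ P' 0 = 0) ∨
             (Q 0 = 0 ∧ P 0 = 1 ∧ Q' 0 = 0 ∧ P' 0 = 1)) :
    ∀ t, 0 ≤ t →
      (((32 * M₃ ^ 2 / m ^ 2) * Real.exp (-(m * t) / (4 * M₂)) * δ ^ 2) •
          (1 : Matrix (Fin d) (Fin d) ℝ) -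
        ((2 : ℝ) • ((Q' t - Q t)ᵀ * (Q' t - Q t)) + (Q' t - Q t)ᵀ * (P' t - P t) +
          (P' t - P t)ᵀ * (Q' t - Q t) + (P' t - P t)ᵀ * (P' t - P t))).PosSemidef := by
  intro t ht
  have hM₂ : 0 < M₂ := lt_of_lt_of_le hm hmM
  rw [Matrix.posSemidef_iff_dotProduct_mulVec]
  constructor
  · -- Hermitian part
    have hT : ∀ M : Matrix (Fin d) (Fin d) ℝ, Mᴴ = Mᵀ := fun M => rfl
    unfold Matrix.IsHermitian
    rw [hT]
    rw [Matrix.transpose_sub, Matrix.transpose_smul, Matrix.transpose_one,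
      Matrix.transpose_add, Matrix.transpose_add, Matrix.transpose_add,
      Matrix.transpose_smul, Matrix.transpose_mul, Matrix.transpose_mul,
      Matrix.transpose_mul, Matrix.transpose_mul, Matrix.transpose_transpose,
      Matrix.transpose_transpose]
    congr 1
    abel
  · intro w
    rw [star_trivial]
    -- vector-valued trajectories
    set q : ℝ → Fin d → ℝ := fun s => (Q' s - Q s) *ᵥ w with hqdef
    set p : ℝ → Fin d → ℝ := fun s => (P' s - P s) *ᵥ w with hpdef
    set qt : ℝ → Fin d → ℝ := fun s => Q' s *ᵥ w with hqtdef
    set pt : ℝ → Fin d → ℝ := fun s => P' s *ᵥ w with hptdef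
    set ev : ℝ → Fin d → ℝ :=
      fun s => (hessMat U (x' s) - hessMat U (x s)) *ᵥ qt s with hevdef
    set V : ℝ → ℝ := fun s => n2 (q s) + n2 (q s + p s) with hVdef
    set Vt : ℝ → ℝ := fun s => n2 (qt s) + n2 (qt s + pt s) with hVtdef
    -- derivative facts
    have hdq : ∀ s, 0 ≤ s → ∀ i, HasDerivAt (fun r => q r i) (p s i) s := by
      intro s hs i
      exact hasDerivAt_mulVec (fun r => Q' r - Q r) (P' s - P s) w s i
        (fun j => ((hQ' s hs i j).sub (hQ s hs i j)))
    have hdqt : ∀ s, 0 ≤ s → ∀ i, HasDerivAt (fun r => qt r i) (pt s i) s := by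
      intro s hs i
      exact hasDerivAt_mulVec (fun r => Q' r) (P' s) w s i (fun j => hQ' s hs i j)
    have hdp : ∀ s, 0 ≤ s → ∀ i, HasDerivAt (fun r => p r i)
        (-(1/M₂) * ((hessMat U (x s) *ᵥ q s) i + ev s i) - 2 * p s i) s := by
      intro s hs i
      have base := hasDerivAt_mulVec (fun r => P' r - P r)
        ((((-(1 / M₂)) • (hessMat U (x' s) * Q' s) - (2 : ℝ) • P' s)) -
         (((-(1 / M₂)) • (hessMat U (x s) * Q s) - (2 : ℝ) • P s))) w s i
        (fun j => ((hP' s hs i j).sub (hP s hs i j)))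
      have eq1 : (((((-(1 / M₂)) • (hessMat U (x' s) * Q' s) - (2 : ℝ) • P' s)) -
         (((-(1 / M₂)) • (hessMat U (x s) * Q s) - (2 : ℝ) • P s))) *ᵥ w) i
          = -(1/M₂) * ((hessMat U (x s) *ᵥ q s) i + ev s i) - 2 * p s i := by
        simp only [hqdef, hpdef, hqtdef, hevdef]
        simp only [Matrix.sub_mulVec, Matrix.smul_mulVec, ← Matrix.mulVec_mulVec,
          Matrix.mulVec_sub, Pi.sub_apply, Pi.smul_apply, smul_eq_mul]
        ring
      rw [eq1] at base
      exact base
    have hdpt : ∀ s, 0 ≤ s → ∀ i, HasDerivAt (fun r => pt r i)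
        (-(1/M₂) * ((hessMat U (x' s) *ᵥ qt s) i + (0:Fin d → ℝ) i) - 2 * pt s i) s := by
      intro s hs i
      have base := hasDerivAt_mulVec (fun r => P' r)
        (((-(1 / M₂)) • (hessMat U (x' s) * Q' s) - (2 : ℝ) • P' s)) w s i
        (fun j => hP' s hs i j)
      have eq1 : ((((-(1 / M₂)) • (hessMat U (x' s) * Q' s) - (2 : ℝ) • P' s)) *ᵥ w) i
          = -(1/M₂) * ((hessMat U (x' s) *ᵥ qt s) i + (0:Fin d → ℝ) i) - 2 * pt s i := by
        simp only [hqtdef, hptdef]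
        simp only [Matrix.sub_mulVec, Matrix.smul_mulVec, ← Matrix.mulVec_mulVec,
          Matrix.mulVec_sub, Pi.sub_apply, Pi.smul_apply, smul_eq_mul, Pi.zero_apply]
        ring
      rw [eq1] at base
      exact base
    -- derivative of V
    have hdV : ∀ s, 0 ≤ s → HasDerivAt V
        ((∑ i, 2 * q s i * p s i) + (∑ i, 2 * (q s i + p s i) *
          (p s i + (-(1/M₂) * ((hessMat U (x s) *ᵥ q s) i + ev s i) - 2 * p s i)))) s := by
      intro s hs
      have h1 : HasDerivAt (fun r => n2 (q r)) (∑ i, 2 * q s i * p s i) s := by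
        apply HasDerivAt.fun_sum
        intro i _
        have h := (hdq s hs i).fun_pow 2
        convert h using 1
        · rfl
        push_cast
        ring
      have h2 : HasDerivAt (fun r => n2 (q r + p r)) (∑ i, 2 * (q s i + p s i) *
          (p s i + (-(1/M₂) * ((hessMat U (x s) *ᵥ q s) i + ev s i) - 2 * p s i))) s := by
        apply HasDerivAt.fun_sum
        intro i _
        have h := ((hdq s hs i).fun_add (hdp s hs i)).fun_pow 2
        convert h using 1
        · rfl
        · rfl
        push_cast
        ring
      exact h1.add h2
    have hdVt : ∀ s, 0 ≤ s → HasDerivAt Vt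
        ((∑ i, 2 * qt s i * pt s i) + (∑ i, 2 * (qt s i + pt s i) *
          (pt s i + (-(1/M₂) * ((hessMat U (x' s) *ᵥ qt s) i + (0:Fin d → ℝ) i)
            - 2 * pt s i)))) s := by
      intro s hs
      have h1 : HasDerivAt (fun r => n2 (qt r)) (∑ i, 2 * qt s i * pt s i) s := by
        apply HasDerivAt.fun_sum
        intro i _
        have h := (hdqt s hs i).fun_pow 2
        convert h using 1
        · rfl
        push_cast
        ring
      have h2 : HasDerivAt (fun r => n2 (qt r + pt r)) (∑ i, 2 * (qt s i + pt s i) *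
          (pt s i + (-(1/M₂) * ((hessMat U (x' s) *ᵥ qt s) i + (0:Fin d → ℝ) i)
            - 2 * pt s i))) s := by
        apply HasDerivAt.fun_sum
        intro i _
        have h := ((hdqt s hs i).fun_add (hdpt s hs i)).fun_pow 2
        convert h using 1
        · rfl
        · rfl
        push_cast
        ring
      exact h1.add h2
    -- Lyapunov inequalities
    have hVineq : ∀ s, 0 ≤ s →
        ((∑ i, 2 * q s i * p s i) + (∑ i, 2 * (q s i + p s i) *
          (p s i + (-(1/M₂) * ((hessMat U (x s) *ᵥ q s) i + ev s i) - 2 * p s i))))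
          ≤ -(m/(2*M₂)) * V s + (2/(m*M₂)) * n2 (ev s) := by
      intro s hs
      exact lyap_core m M₂ hm hmM (hessMat U (x s)) (hess_symm U hU (x s))
        (fun v => (hess_form_bounds m M₂ U hHess (x s) v).1)
        (fun v => (hess_form_bounds m M₂ U hHess (x s) v).2) (q s) (p s) (ev s)
    have hVtineq : ∀ s, 0 ≤ s →
        ((∑ i, 2 * qt s i * pt s i) + (∑ i, 2 * (qt s i + pt s i) *
          (pt s i + (-(1/M₂) * ((hessMat U (x' s) *ᵥ qt s) i + (0:Fin d → ℝ) i)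
            - 2 * pt s i)))) ≤ -(m/(2*M₂)) * Vt s := by
      intro s hs
      have h := lyap_core m M₂ hm hmM (hessMat U (x' s)) (hess_symm U hU (x' s))
        (fun v => (hess_form_bounds m M₂ U hHess (x' s) v).1)
        (fun v => (hess_form_bounds m M₂ U hHess (x' s) v).2) (qt s) (pt s) 0
      have hz : n2 (0 : Fin d → ℝ) = 0 := by simp [n2]
      rw [hz] at h
      calc _ ≤ -(m/(2*M₂)) * (n2 (qt s) + n2 (qt s + pt s)) + (2/(m*M₂)) * 0 := h
        _ = -(m/(2*M₂)) * Vt s := by rw [hVtdef]; ring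
    -- homogeneous decay
    have hn2z : n2 (0 : Fin d → ℝ) = 0 := by simp [n2]
    have hVt0 : Vt 0 ≤ 2 * n2 w := by
      have hVt0eq : Vt 0 = n2 (qt 0) + n2 (qt 0 + pt 0) := rfl
      rcases hinit with ⟨_, _, h3, h4⟩ | ⟨_, _, h3, h4⟩
      · have e1 : qt 0 = w := by rw [hqtdef]; simp [h3, Matrix.one_mulVec]
        have e2 : pt 0 = 0 := by rw [hptdef]; simp [h4, Matrix.zero_mulVec]
        rw [hVt0eq, e1, e2, add_zero]
        linarith [n2_nonneg w]
      · have e1 : qt 0 = 0 := by rw [hqtdef]; simp [h3, Matrix.zero_mulVec]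
        have e2 : pt 0 = w := by rw [hptdef]; simp [h4, Matrix.one_mulVec]
        rw [hVt0eq, e1, e2, zero_add, hn2z, zero_add]
        linarith [n2_nonneg w]
    have hVtnonneg : ∀ s, 0 ≤ Vt s := fun s =>
      add_nonneg (n2_nonneg _) (n2_nonneg _)
    have hVtdecay : ∀ s, 0 ≤ s → Vt s ≤ 2 * n2 w * Real.exp (-((m/(2*M₂)) * s)) := by
      intro s hs
      have hg : ∀ r ∈ Set.Ici (0:ℝ), HasDerivAt
          (fun r => 2 * n2 w - Real.exp ((m/(2*M₂)) * r) * Vt r)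
          (-( ((m/(2*M₂)) * Real.exp ((m/(2*M₂)) * r)) * Vt r +
            Real.exp ((m/(2*M₂)) * r) *
            ((∑ i, 2 * qt r i * pt r i) + (∑ i, 2 * (qt r i + pt r i) *
              (pt r i + (-(1/M₂) * ((hessMat U (x' r) *ᵥ qt r) i + (0:Fin d → ℝ) i)
                - 2 * pt r i)))))) r := by
        intro r hr
        have hexp : HasDerivAt (fun u : ℝ => Real.exp ((m/(2*M₂)) * u))
            ((m/(2*M₂)) * Real.exp ((m/(2*M₂)) * r)) r := by
          simpa [mul_comm] using ((hasDerivAt_id r).const_mul (m/(2*M₂))).exp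
        exact ((hexp.mul (hdVt r hr)).const_sub _)
      have hmono := le_of_deriv_nonneg hg (by
        intro r hr
        have h1 := hVtineq r hr
        have h2 : (0:ℝ) < Real.exp ((m/(2*M₂)) * r) := Real.exp_pos _
        have h3 := hVtnonneg r
        have := mul_le_mul_of_nonneg_left h1 h2.le
        nlinarith) hs
      simp only [mul_zero, Real.exp_zero, one_mul] at hmono
      -- hmono : 2 * n2 w - Vt 0 ≤ 2 * n2 w - exp (κ s) * Vt s
      have hkey : Real.exp ((m/(2*M₂)) * s) * Vt s ≤ 2 * n2 w := by
        have h1 : Real.exp ((m/(2*M₂)) * s) * Vt s ≤ Vt 0 := by linarith [hmono]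
        exact h1.trans hVt0
      rw [Real.exp_neg, ← div_eq_mul_inv, le_div_iff₀ (Real.exp_pos _)]
      rw [mul_comm]
      exact hkey
    -- forcing bound
    have hnw := Stmt3Aux.n2_nonneg w
    have hqtle : ∀ s, n2 (qt s) ≤ Vt s := by
      intro s
      have h := n2_nonneg (qt s + pt s)
      have : Vt s = n2 (qt s) + n2 (qt s + pt s) := rfl
      linarith
    have hforce : ∀ s, 0 ≤ s → (2/(m*M₂)) * n2 (ev s) ≤
        (8*M₃^2*δ^2*(n2 w)/(m*M₂)) * (Real.exp (-((m/(2*M₂)) * s)))^3 := by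
      intro s hs
      have h1 : n2 (ev s) ≤ (M₃ * ‖x' s - x s‖)^2 * n2 (qt s) :=
        mulVec_sq_bound U hU M₃ hM₃.le hThird (x s) (x' s) (qt s)
      have h2 : ‖x' s - x s‖ ≤ Real.sqrt 2 * Real.exp (-((m/(2*M₂)) * s)) * δ := by
        have hcl := hclose s hs
        rw [show -((m/(2*M₂)) * s) = -(m*s)/(2*M₂) by ring]
        exact hcl
      have hexp0 : (0:ℝ) < Real.exp (-((m/(2*M₂)) * s)) := Real.exp_pos _
      have h2' : ‖x' s - x s‖^2 ≤ 2 * (Real.exp (-((m/(2*M₂)) * s)))^2 * δ^2 := by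
        have hrhs : (Real.sqrt 2 * Real.exp (-((m/(2*M₂)) * s)) * δ)^2
            = 2 * (Real.exp (-((m/(2*M₂)) * s)))^2 * δ^2 := by
          rw [mul_pow, mul_pow, Real.sq_sqrt (by norm_num : (0:ℝ) ≤ 2)]
        calc ‖x' s - x s‖^2 ≤ (Real.sqrt 2 * Real.exp (-((m/(2*M₂)) * s)) * δ)^2 :=
              pow_le_pow_left₀ (norm_nonneg _) h2 2
          _ = 2 * (Real.exp (-((m/(2*M₂)) * s)))^2 * δ^2 := hrhs
      have h3 : n2 (qt s) ≤ 2 * n2 w * Real.exp (-((m/(2*M₂)) * s)) :=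
        (hqtle s).trans (hVtdecay s hs)
      have h4 : n2 (ev s) ≤ M₃^2 * (2 * (Real.exp (-((m/(2*M₂)) * s)))^2 * δ^2) *
          (2 * n2 w * Real.exp (-((m/(2*M₂)) * s))) := by
        calc n2 (ev s) ≤ (M₃ * ‖x' s - x s‖)^2 * n2 (qt s) := h1
          _ = M₃^2 * ‖x' s - x s‖^2 * n2 (qt s) := by ring
          _ ≤ M₃^2 * (2 * (Real.exp (-((m/(2*M₂)) * s)))^2 * δ^2) *
              (2 * n2 w * Real.exp (-((m/(2*M₂)) * s))) := by
            apply mul_le_mul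
            · exact mul_le_mul_of_nonneg_left h2' (by positivity)
            · exact h3
            · exact n2_nonneg _
            · positivity
      calc (2/(m*M₂)) * n2 (ev s)
          ≤ (2/(m*M₂)) * (M₃^2 * (2 * (Real.exp (-((m/(2*M₂)) * s)))^2 * δ^2) *
            (2 * n2 w * Real.exp (-((m/(2*M₂)) * s)))) :=
            mul_le_mul_of_nonneg_left h4 (by positivity)
        _ = (8*M₃^2*δ^2*(n2 w)/(m*M₂)) * (Real.exp (-((m/(2*M₂)) * s)))^3 := by ring
    -- V 0 = 0
    have hV0 : V 0 = 0 := by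
      have hq0 : q 0 = 0 := by
        rcases hinit with ⟨h1,h2,h3,h4⟩|⟨h1,h2,h3,h4⟩ <;>
          (rw [hqdef]; simp [h1, h3, sub_self, Matrix.zero_mulVec])
      have hp0 : p 0 = 0 := by
        rcases hinit with ⟨h1,h2,h3,h4⟩|⟨h1,h2,h3,h4⟩ <;>
          (rw [hpdef]; simp [h2, h4, sub_self, Matrix.zero_mulVec])
      have : V 0 = n2 (q 0) + n2 (q 0 + p 0) := rfl
      rw [this, hq0, hp0, add_zero, hn2z, add_zero]
    -- exp combination lemma
    have hEcomb : ∀ r:ℝ, Real.exp ((m/(2*M₂))*r) * (Real.exp (-((m/(2*M₂))*r)))^3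
        = Real.exp (-((m/M₂))*r) := by
      intro r
      rw [← Real.exp_nat_mul, ← Real.exp_add]
      congr 1
      push_cast
      ring
    set C₀ : ℝ := 8*M₃^2*δ^2*(n2 w)/(m*M₂) with hC₀def
    set K1 : ℝ := C₀ * (M₂/m) with hK1def
    have hC₀0 : 0 ≤ C₀ := by
      rw [hC₀def]
      apply div_nonneg _ (by positivity)
      exact mul_nonneg (by positivity) hnw
    have hK10 : 0 ≤ K1 := by
      rw [hK1def]
      exact mul_nonneg hC₀0 (by positivity)
    have hK1m : K1 * (m/M₂) = C₀ := by
      rw [hK1def]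
      field_simp
    -- main Gronwall integration
    have hVbound : V t ≤ K1 * Real.exp (-((m/(2*M₂)) * t)) := by
      have hg : ∀ r ∈ Set.Ici (0:ℝ), HasDerivAt
          (fun r => K1 * (1 - Real.exp (-(m/M₂) * r)) - Real.exp ((m/(2*M₂)) * r) * V r)
          ((K1 * (-(-(m/M₂) * Real.exp (-(m/M₂) * r)))) -
            (((m/(2*M₂)) * Real.exp ((m/(2*M₂)) * r)) * V r +
            Real.exp ((m/(2*M₂)) * r) *
            ((∑ i, 2 * q r i * p r i) + (∑ i, 2 * (q r i + p r i) *
              (p r i + (-(1/M₂) * ((hessMat U (x r) *ᵥ q r) i + ev r i) - 2 * p r i)))))) r := by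
        intro r hr
        have hexp1 : HasDerivAt (fun u : ℝ => Real.exp (-(m/M₂) * u))
            ((-(m/M₂)) * Real.exp (-(m/M₂) * r)) r := by
          simpa [mul_comm] using ((hasDerivAt_id r).const_mul (-(m/M₂))).exp
        have hexp2 : HasDerivAt (fun u : ℝ => Real.exp ((m/(2*M₂)) * u))
            ((m/(2*M₂)) * Real.exp ((m/(2*M₂)) * r)) r := by
          simpa [mul_comm] using ((hasDerivAt_id r).const_mul (m/(2*M₂))).exp
        exact ((hexp1.const_sub 1).const_mul K1).sub (hexp2.mul (hdV r hr))
      have hmono := le_of_deriv_nonneg hg (by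
        intro r hr
        have h1 := hVineq r hr
        have h2 := hforce r hr
        have hE : (0:ℝ) < Real.exp ((m/(2*M₂)) * r) := Real.exp_pos _
        have h3 : (∑ i, 2 * q r i * p r i) + (∑ i, 2 * (q r i + p r i) *
              (p r i + (-(1/M₂) * ((hessMat U (x r) *ᵥ q r) i + ev r i) - 2 * p r i)))
            ≤ -(m/(2*M₂)) * V r + C₀ * (Real.exp (-((m/(2*M₂)) * r)))^3 := by
          calc _ ≤ -(m/(2*M₂)) * V r + (2/(m*M₂)) * n2 (ev r) := h1
            _ ≤ -(m/(2*M₂)) * V r + C₀ * (Real.exp (-((m/(2*M₂)) * r)))^3 := by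
                rw [hC₀def]; linarith [h2]
        have h4 := mul_le_mul_of_nonneg_left h3 hE.le
        have h5 : Real.exp ((m/(2*M₂)) * r) *
            (-(m/(2*M₂)) * V r + C₀ * (Real.exp (-((m/(2*M₂)) * r)))^3)
            = -((m/(2*M₂)) * Real.exp ((m/(2*M₂)) * r) * V r)
              + C₀ * (Real.exp ((m/(2*M₂))*r) * (Real.exp (-((m/(2*M₂))*r)))^3) := by ring
        rw [h5, hEcomb r] at h4
        have h6 : K1 * (-(-(m/M₂) * Real.exp (-(m/M₂) * r)))
            = C₀ * Real.exp (-(m/M₂) * r) := by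
          rw [← hK1m]; ring
        rw [h6]
        have h7 : Real.exp (-(m/M₂) * r) = Real.exp (-(m/M₂)*r) := rfl
        nlinarith [h4]) ht
      -- evaluate at 0
      have hf0 : K1 * (1 - Real.exp (-(m/M₂) * 0)) - Real.exp ((m/(2*M₂)) * 0) * V 0 = 0 := by
        rw [hV0]
        norm_num
      rw [hf0] at hmono
      have hkey : Real.exp ((m/(2*M₂)) * t) * V t ≤ K1 := by
        have hexpt : (0:ℝ) ≤ Real.exp (-(m/M₂) * t) := (Real.exp_pos _).le
        have := mul_nonneg hK10 hexpt
        nlinarith [hmono]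
      rw [Real.exp_neg, ← div_eq_mul_inv, le_div_iff₀ (Real.exp_pos _)]
      rw [mul_comm]
      exact hkey
    -- final assembly
    have hformS : w ⬝ᵥ (((2 : ℝ) • ((Q' t - Q t)ᵀ * (Q' t - Q t)) + (Q' t - Q t)ᵀ * (P' t - P t) +
          (P' t - P t)ᵀ * (Q' t - Q t) + (P' t - P t)ᵀ * (P' t - P t)) *ᵥ w) = V t := by
      rw [Matrix.add_mulVec, Matrix.add_mulVec, Matrix.add_mulVec, Matrix.smul_mulVec,
        dotProduct_add, dotProduct_add, dotProduct_add, dotProduct_smul]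
      rw [← Matrix.mulVec_mulVec, ← Matrix.mulVec_mulVec, ← Matrix.mulVec_mulVec,
        ← Matrix.mulVec_mulVec]
      rw [Matrix.dotProduct_mulVec w, Matrix.vecMul_transpose,
        Matrix.dotProduct_mulVec w, Matrix.vecMul_transpose,
        Matrix.dotProduct_mulVec w, Matrix.vecMul_transpose,
        Matrix.dotProduct_mulVec w, Matrix.vecMul_transpose]
      have hVt' : V t = n2 (q t) + n2 (q t + p t) := rfl
      rw [hVt', hqdef, hpdef]
      simp only [dotProduct, n2, Pi.add_apply, smul_eq_mul, Finset.mul_sum,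
        ← Finset.sum_add_distrib]
      refine Finset.sum_congr rfl fun i _ => ?_
      ring
    have hformI : w ⬝ᵥ ((((32 * M₃ ^ 2 / m ^ 2) * Real.exp (-(m * t) / (4 * M₂)) * δ ^ 2) •
          (1 : Matrix (Fin d) (Fin d) ℝ)) *ᵥ w)
        = ((32 * M₃ ^ 2 / m ^ 2) * Real.exp (-(m * t) / (4 * M₂)) * δ ^ 2) * n2 w := by
      rw [Matrix.smul_mulVec, Matrix.one_mulVec, dotProduct_smul]
      have : w ⬝ᵥ w = n2 w := by
        simp only [dotProduct, n2]
        exact Finset.sum_congr rfl fun i _ => by ring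
      rw [this, smul_eq_mul]
    rw [Matrix.sub_mulVec, dotProduct_sub, hformS, hformI, sub_nonneg]
    -- compare
    have hexpcmp : Real.exp (-((m/(2*M₂)) * t)) ≤ Real.exp (-(m * t) / (4 * M₂)) := by
      apply Real.exp_le_exp.mpr
      have h1 : 0 ≤ m * t := mul_nonneg hm.le ht
      rw [show -((m/(2*M₂)) * t) = -((m*t)/(2*M₂)) by ring, neg_div, neg_le_neg_iff]
      exact div_le_div_of_nonneg_left h1 (by positivity) (by linarith)
    have hK1eq : K1 = 8*M₃^2*δ^2*(n2 w)/m^2 := by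
      rw [hK1def, hC₀def]
      field_simp
    have hfin : V t ≤ (32 * M₃ ^ 2 / m ^ 2) * Real.exp (-(m * t) / (4 * M₂)) * δ ^ 2 * n2 w := by
      calc V t ≤ K1 * Real.exp (-((m/(2*M₂)) * t)) := hVbound
        _ ≤ K1 * Real.exp (-(m * t) / (4 * M₂)) :=
            mul_le_mul_of_nonneg_left hexpcmp hK10
        _ = 8*M₃^2*δ^2*(n2 w)/m^2 * Real.exp (-(m * t) / (4 * M₂)) := by rw [hK1eq]
        _ ≤ (32 * M₃ ^ 2 / m ^ 2) * Real.exp (-(m * t) / (4 * M₂)) * δ ^ 2 * n2 w := by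
            have hE : (0:ℝ) < Real.exp (-(m * t) / (4 * M₂)) := Real.exp_pos _
            have h8 : (0:ℝ) ≤ 8*M₃^2*δ^2*(n2 w)/m^2 * Real.exp (-(m * t) / (4 * M₂)) := by
              apply mul_nonneg _ hE.le
              apply div_nonneg _ (by positivity)
              exact mul_nonneg (by positivity) hnw
            rw [show (32 * M₃ ^ 2 / m ^ 2) * Real.exp (-(m * t) / (4 * M₂)) * δ ^ 2 * n2 w
              = 4 * (8*M₃^2*δ^2*(n2 w)/m^2 * Real.exp (-(m * t) / (4 * M₂))) from by ring]
            linarith [h8]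
    exact hfin
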